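/- arXiv:1905.02133 — 3 statements merged into one kernel-verified Lean document; each statement's English description precedes it below -/
import Mathlib

section
/- Under the same KKT setup: if a right vertex j ∈ J has a neighbor j' ∈ I with L_{j'} < 1 and z_{(j',j)} > 0, then w_j = R_j·η. -/
open Finset

open Finset

/-- KKT conditions for the program `max ∑_j u j · ln R_j` over nonnegative edge
variables `z` supported on `E`, with `L i = ∑ j, z i j ≤ 1`, `∑ i, L i ≤ m`:
multipliers `θ i ≥ 0`, `η ≥ 0`, `ν e ≥ 0`, stationarity `u j / R j = θ i + η − ν i j`
on each edge, and complementary slackness. -/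
def KKT {I J : Type*} [Fintype I] [Fintype J]
    (E : Finset (I × J)) (m : ℝ) (u : J → ℝ) (z : I → J → ℝ)
    (θ : I → ℝ) (η : ℝ) (ν : I → J → ℝ) : Prop :=
  (∀ i, 0 ≤ θ i) ∧ 0 ≤ η ∧ (∀ i j, 0 ≤ ν i j) ∧
    (∀ i j, (i, j) ∈ E → u j / (∑ i', z i' j) = θ i + η - ν i j) ∧
    (∀ i : I, θ i * ((∑ j, z i j) - 1) = 0) ∧
    (η * ((∑ i, ∑ j, z i j) - m) = 0) ∧
    (∀ i j, ν i j * z i j = 0)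

namespace KKT

variable {I J : Type*} [Fintype I] [Fintype J] {E : Finset (I × J)} {m : ℝ} {u : J → ℝ}
  {z : I → J → ℝ} {θ : I → ℝ} {η : ℝ} {ν : I → J → ℝ}

theorem theta_eq_zero_of_load_lt_one (h : KKT E m u z θ η ν) {i : I}
    (hL : ∑ j, z i j < 1) : θ i = 0 :=
  (mul_eq_zero.mp (h.2.2.2.2.1 i)).resolve_right (sub_ne_zero.mpr hL.ne)

theorem nu_eq_zero_of_pos (h : KKT E m u z θ η ν) {i : I} {j : J} (hz : 0 < z i j) :
    ν i j = 0 :=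
  (mul_eq_zero.mp (h.2.2.2.2.2.2 i j)).resolve_right hz.ne'

theorem div_rate_eq_eta (h : KKT E m u z θ η ν) {i : I} {j : J} (hiE : (i, j) ∈ E)
    (hL : ∑ j', z i j' < 1) (hz : 0 < z i j) : u j / ∑ i', z i' j = η := by
  rw [h.2.2.2.1 i j hiE, h.theta_eq_zero_of_load_lt_one hL, h.nu_eq_zero_of_pos hz]
  ring

end KKT

theorem kkt_weight_eq_rate_mul_eta_general {I J : Type*} [Fintype I] [Fintype J]
    (E : Finset (I × J)) (m : ℝ) (w : J → ℝ) (z : I → J → ℝ)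
    (θ : I → ℝ) (η : ℝ) (ν : I → J → ℝ)
    (hkkt : KKT E m w z θ η ν)
    (j : J) (hR : 0 < ∑ i, z i j)
    (i : I) (hiE : (i, j) ∈ E) (hL : ∑ j', z i j' < 1) (hzij : 0 < z i j) :
    w j = (∑ i', z i' j) * η := by
  rw [← hkkt.div_rate_eq_eta hiE hL hzij, mul_div_cancel₀ _ hR.ne']

/-- Claim "sum": under the KKT conditions, if a right vertex `j` has a neighbor
`j' ∈ I` with load `L j' < 1` and `z (j',j) > 0`, then `w j = R j · η`. -/
theorem kkt_weight_eq_rate_mul_eta {I J : Type*} [Fintype I] [Fintype J]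
    (E : Finset (I × J)) (m : ℝ) (w : J → ℝ) (z : I → J → ℝ)
    (θ : I → ℝ) (η : ℝ) (ν : I → J → ℝ)
    (hz : ∀ i j, 0 ≤ z i j)
    (hkkt : KKT E m w z θ η ν)
    (j : J) (hR : 0 < ∑ i, z i j)
    (i : I) (hiE : (i, j) ∈ E) (hL : ∑ j', z i j' < 1) (hzij : 0 < z i j) :
    w j = (∑ i', z i' j) * η :=
  kkt_weight_eq_rate_mul_eta_general E m w z θ η ν hkkt j hR i hiE hL hzij
end

section
/- Tight-set saturation: in the setting of the previous statement, suppose additionally that J' ⊆ J satisfies w(J')·T = |Γ(J')| and the fractional Hall condition holds for all subsets of J. Then for any nonnegative z with Σ_{e∋j} z_e = w_j·T for all j∈J and Σ_{e∋i} z_e ≤ 1 for all i∈I, every vertex i ∈ Γ(J') satisfies Σ_{e∋i, e between Γ(J') and J'} z_e = 1, i.e., all vertices of Γ(J') are fully saturated via edges to J'. -/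
/-!
The mass that `J'` sends out lands entirely in `Γ(J')`, so it equals both `w(J')·T = |Γ(J')|`
and the sum over `i ∈ Γ(J')` of the loads received from `J'`, each of which is at most `1`.
A sum of `|Γ(J')|` terms bounded by `1` that equals `|Γ(J')|` has every term equal to `1`.
-/

open Finset

theorem sum_neighborhood_sum_eq_sum_sum {I J M : Type*} [Fintype I] [DecidableEq I]
    [DecidableEq J] [AddCommMonoid M] (E : Finset (I × J)) (J' : Finset J) (z : I → J → M)
    (hzE : ∀ i j, (i, j) ∉ E → z i j = 0) :
    ∑ i ∈ (E.filter (fun e => e.2 ∈ J')).image Prod.fst, ∑ j ∈ J', z i j =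
      ∑ j ∈ J', ∑ i, z i j := by
  rw [sum_subset (subset_univ _), sum_comm]
  intro i _ hi
  refine sum_eq_zero fun j hj => hzE i j fun hij => hi ?_
  exact mem_image.2 ⟨(i, j), mem_filter.2 ⟨hij, hj⟩, rfl⟩

theorem tight_set_saturation_general {I J : Type*} [Fintype I] [Fintype J]
    [DecidableEq I] [DecidableEq J]
    (E : Finset (I × J)) (w : J → ℝ) (T : ℝ)
    (J' : Finset J)
    (htight : (∑ j ∈ J', w j) * T =
      (((E.filter (fun e => e.2 ∈ J')).image Prod.fst).card : ℝ))
    (z : I → J → ℝ)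
    (hz0 : ∀ i j, 0 ≤ z i j) (hzE : ∀ i j, (i, j) ∉ E → z i j = 0)
    (hR : ∀ j : J, ∑ i, z i j = w j * T) (hL : ∀ i : I, ∑ j, z i j ≤ 1) :
    ∀ i ∈ (E.filter (fun e => e.2 ∈ J')).image Prod.fst,
      ∑ j ∈ J', z i j = 1 := by
  set Γ := (E.filter (fun e => e.2 ∈ J')).image Prod.fst
  have hle : ∀ i ∈ Γ, ∑ j ∈ J', z i j ≤ 1 := fun i _ =>
    (sum_le_sum_of_subset_of_nonneg (subset_univ J') fun j _ _ => hz0 i j).trans (hL i)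
  have hsum : ∑ i ∈ Γ, ∑ j ∈ J', z i j = ∑ _i ∈ Γ, (1 : ℝ) := by
    rw [sum_neighborhood_sum_eq_sum_sum E J' z hzE, sum_congr rfl fun j _ => hR j, ← sum_mul,
      htight, sum_const, nsmul_one]
  exact (sum_eq_sum_iff_of_le hle).1 hsum

/-- Tight-set saturation: if the fractional Hall condition holds for all
subsets and `J' ⊆ J` is tight (`w(J')·T = |Γ(J')|`), then for any nonnegative
fractional assignment with right-loads `w_j·T` and left-loads at most `1`,
every vertex `i ∈ Γ(J')` receives total mass exactly `1` from the edges to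
`J'`. -/
theorem tight_set_saturation {I J : Type*} [Fintype I] [Fintype J]
    [DecidableEq I] [DecidableEq J]
    (E : Finset (I × J)) (w : J → ℝ) (hw : ∀ j, 0 < w j) (T : ℝ) (hT : 0 ≤ T)
    (hHall : ∀ J'' : Finset J,
      (∑ j ∈ J'', w j) * T ≤ (((E.filter (fun e => e.2 ∈ J'')).image Prod.fst).card : ℝ))
    (J' : Finset J)
    (htight : (∑ j ∈ J', w j) * T =
      (((E.filter (fun e => e.2 ∈ J')).image Prod.fst).card : ℝ))
    (z : I → J → ℝ)
    (hz0 : ∀ i j, 0 ≤ z i j) (hzE : ∀ i j, (i, j) ∉ E → z i j = 0)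
    (hR : ∀ j : J, ∑ i, z i j = w j * T) (hL : ∀ i : I, ∑ j, z i j ≤ 1) :
    ∀ i ∈ (E.filter (fun e => e.2 ∈ J')).image Prod.fst,
      ∑ j ∈ J', z i j = 1 :=
  tight_set_saturation_general E w T J' htight z hz0 hzE hR hL
end

section
/- Under the KKT conditions for the convex program with modified weights ŵ_{j,t} (i.e., ŵ_{j,t}/R_j = θ_{j'} + η − ν_e for every edge e=(j',j), plus complementary slackness), for every right vertex j with some incident edge carrying positive z: ŵ_{j,t} ≥ R_j·η; and if moreover j has a neighbor j'∈I with L_{j'} < 1, then ŵ_{j,t} = R_j·η. -/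
/-!
On an edge `(i, j)` carrying positive flow, complementary slackness kills `ν i j`, so
stationarity reads `u j / R j = θ i + η ≥ η`. If some neighbour `i'` of `j` is not saturated,
then `θ i' = 0` and stationarity on `(i', j)` gives `u j / R j = η - ν i' j ≤ η`.
Both bounds are multiplied out using `R j = ∑ i, z i j ≥ z i j > 0`.
-/

open Finset

namespace KKT

variable {I J : Type*} [Fintype I] [Fintype J] {E : Finset (I × J)} {m : ℝ} {u : J → ℝ}
  {z : I → J → ℝ} {θ : I → ℝ} {η : ℝ} {ν : I → J → ℝ}

theorem ratio_eq_of_pos (h : KKT E m u z θ η ν) {i : I} {j : J} (hE : (i, j) ∈ E)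
    (hpos : 0 < z i j) : u j / ∑ i', z i' j = θ i + η := by
  obtain ⟨-, -, -, hstat, -, -, hcsν⟩ := h
  have hν : ν i j = 0 := (mul_eq_zero.mp (hcsν i j)).resolve_right hpos.ne'
  rw [hstat i j hE, hν, sub_zero]

theorem le_ratio_of_pos (h : KKT E m u z θ η ν) {i : I} {j : J} (hE : (i, j) ∈ E)
    (hpos : 0 < z i j) : η ≤ u j / ∑ i', z i' j := by
  rw [h.ratio_eq_of_pos hE hpos]
  linarith [h.1 i]

theorem ratio_le_of_load_lt_one (h : KKT E m u z θ η ν) {i : I} {j : J} (hE : (i, j) ∈ E)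
    (hload : ∑ j', z i j' < 1) : u j / ∑ i', z i' j ≤ η := by
  obtain ⟨-, -, hν, hstat, hcsθ, -, -⟩ := h
  have hθ : θ i = 0 := (mul_eq_zero.mp (hcsθ i)).resolve_right (sub_ne_zero.mpr hload.ne)
  rw [hstat i j hE, hθ, zero_add]
  linarith [hν i j]

end KKT

/-- Claim "sumnew": for the convex program with modified weights `wHat`, under
the KKT conditions, every right vertex `j` with an incident edge carrying
positive `z` satisfies `wHat j ≥ R j · η`; if moreover `j` has a neighbor
`j' ∈ I` with `L j' < 1` (i.e. `j` is active), then `wHat j = R j · η`. -/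
theorem kkt_modified_weights_bounds {I J : Type*} [Fintype I] [Fintype J]
    (E : Finset (I × J)) (m : ℝ) (wHat : J → ℝ) (z : I → J → ℝ)
    (θ : I → ℝ) (η : ℝ) (ν : I → J → ℝ)
    (hz : ∀ i j, 0 ≤ z i j)
    (hkkt : KKT E m wHat z θ η ν)
    (j : J) (hedge : ∃ i : I, (i, j) ∈ E ∧ 0 < z i j) :
    wHat j ≥ (∑ i, z i j) * η ∧
      ((∃ i : I, (i, j) ∈ E ∧ ∑ j', z i j' < 1) → wHat j = (∑ i, z i j) * η) := by
  obtain ⟨i, hiE, hpos⟩ := hedge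
  have hR : 0 < ∑ i', z i' j :=
    hpos.trans_le (single_le_sum (fun i' _ => hz i' j) (mem_univ i))
  have hge : (∑ i, z i j) * η ≤ wHat j :=
    mul_comm η _ ▸ (le_div_iff₀ hR).mp (hkkt.le_ratio_of_pos hiE hpos)
  refine ⟨hge, fun ⟨i', hi'E, hload⟩ => le_antisymm ?_ hge⟩
  exact mul_comm η _ ▸ (div_le_iff₀ hR).mp (hkkt.ratio_le_of_load_lt_one hi'E hload)
end
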